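/- arXiv:1412.0113 — 5 statements merged into one kernel-verified Lean document; each statement's English description precedes it below -/
import Mathlib

section
/- Let A be an m-th order n-dimensional real tensor. Then A is an R-tensor if and only if A is an R₀-tensor and the tensor complementarity problem (e, A), where e = (1,1,...,1)ᵀ, has the zero vector as its unique solution. -/
/-!
Both the R- and the R₀-condition say that a complementarity problem `(t e, A)` has only the
trivial solution: for every `t ≥ 0`, respectively for `t = 0`. Since `x ↦ A x^{m-1}` is
homogeneous of degree `m - 1`, scaling a solution of `(t e, A)` with `t > 0` by a suitable
positive factor yields a solution of `(e, A)`, so the cases `t > 0` reduce to `t = 1`.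
-/

open Finset

/-- The $i$-th component of $\mathcal{A}x^{m-1}$ for an order-$(m+2)$, dimension-$n$ tensor. -/
def Axm1 {m n : ℕ} (A : (Fin (m + 2) → Fin n) → ℝ) (x : Fin n → ℝ) (i : Fin n) : ℝ :=
  ∑ f : Fin (m + 1) → Fin n, A (Fin.cons i f) * ∏ j, x (f j)

/-- The homogeneous form $\mathcal{A}x^{m}$. -/
def Axm {m n : ℕ} (A : (Fin (m + 2) → Fin n) → ℝ) (x : Fin n → ℝ) : ℝ :=
  ∑ f : Fin (m + 2) → Fin n, A f * ∏ j, x (f j)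

/-- `x` solves the tensor complementarity problem $(q, \mathcal{A})$. -/
def IsTCPSol {m n : ℕ} (A : (Fin (m + 2) → Fin n) → ℝ) (q x : Fin n → ℝ) : Prop :=
  (∀ i, 0 ≤ x i) ∧ (∀ i, 0 ≤ q i + Axm1 A x i) ∧ ∑ i, x i * (q i + Axm1 A x i) = 0

/-- Q-tensor: the TCP $(q,\mathcal{A})$ has a solution for every $q$. -/
def QTensor {m n : ℕ} (A : (Fin (m + 2) → Fin n) → ℝ) : Prop :=
  ∀ q : Fin n → ℝ, ∃ x : Fin n → ℝ, IsTCPSol A q x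

/-- R-tensor. -/
def RTensor {m n : ℕ} (A : (Fin (m + 2) → Fin n) → ℝ) : Prop :=
  ¬ ∃ (x : Fin n → ℝ) (t : ℝ), (∀ i, 0 ≤ x i) ∧ x ≠ 0 ∧ 0 ≤ t ∧
      (∀ i, 0 < x i → Axm1 A x i + t = 0) ∧ (∀ j, x j = 0 → 0 ≤ Axm1 A x j + t)

/-- R₀-tensor. -/
def R0Tensor {m n : ℕ} (A : (Fin (m + 2) → Fin n) → ℝ) : Prop :=
  ¬ ∃ x : Fin n → ℝ, (∀ i, 0 ≤ x i) ∧ x ≠ 0 ∧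
      (∀ i, 0 < x i → Axm1 A x i = 0) ∧ (∀ j, x j = 0 → 0 ≤ Axm1 A x j)

/-- Semi-positive tensor. -/
def SemiPositive {m n : ℕ} (A : (Fin (m + 2) → Fin n) → ℝ) : Prop :=
  ∀ x : Fin n → ℝ, (∀ i, 0 ≤ x i) → x ≠ 0 → ∃ k, 0 < x k ∧ 0 ≤ Axm1 A x k

/-- Strictly semi-positive tensor. -/
def StrictlySemiPositive {m n : ℕ} (A : (Fin (m + 2) → Fin n) → ℝ) : Prop :=
  ∀ x : Fin n → ℝ, (∀ i, 0 ≤ x i) → x ≠ 0 → ∃ k, 0 < x k ∧ 0 < Axm1 A x k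

/-- P-tensor. -/
def PTensor {m n : ℕ} (A : (Fin (m + 2) → Fin n) → ℝ) : Prop :=
  ∀ x : Fin n → ℝ, x ≠ 0 → ∃ i, 0 < x i * Axm1 A x i

/-- Symmetric tensor: entries invariant under permutation of indices. -/
def SymTensor {m n : ℕ} (A : (Fin (m + 2) → Fin n) → ℝ) : Prop :=
  ∀ (f : Fin (m + 2) → Fin n) (σ : Equiv.Perm (Fin (m + 2))), A (f ∘ σ) = A f

/-- Copositive tensor. -/
def Copositive {m n : ℕ} (A : (Fin (m + 2) → Fin n) → ℝ) : Prop :=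
  ∀ x : Fin n → ℝ, (∀ i, 0 ≤ x i) → 0 ≤ Axm A x

/-- Strictly copositive tensor. -/
def StrictlyCopositive {m n : ℕ} (A : (Fin (m + 2) → Fin n) → ℝ) : Prop :=
  ∀ x : Fin n → ℝ, (∀ i, 0 ≤ x i) → x ≠ 0 → 0 < Axm A x


lemma Axm1_smul {m n : ℕ} (A : (Fin (m + 2) → Fin n) → ℝ) (c : ℝ) (x : Fin n → ℝ) (i : Fin n) :
    Axm1 A (c • x) i = c ^ (m + 1) * Axm1 A x i := by
  simp only [Axm1, Pi.smul_apply, smul_eq_mul, Finset.prod_mul_distrib, Finset.prod_const,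
    Finset.card_univ, Fintype.card_fin, Finset.mul_sum]
  exact Finset.sum_congr rfl fun _ _ => by ring

lemma Axm1_zero {m n : ℕ} (A : (Fin (m + 2) → Fin n) → ℝ) (i : Fin n) :
    Axm1 A 0 i = 0 := by
  simpa using Axm1_smul A 0 0 i

lemma isTCPSol_iff {m n : ℕ} (A : (Fin (m + 2) → Fin n) → ℝ) (q x : Fin n → ℝ) :
    IsTCPSol A q x ↔ (∀ i, 0 ≤ x i) ∧ (∀ i, 0 < x i → Axm1 A x i + q i = 0) ∧
      ∀ j, x j = 0 → 0 ≤ Axm1 A x j + q j := by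
  simp only [add_comm (Axm1 A x _)]
  constructor
  · rintro ⟨hx, hw, hsum⟩
    have hterm : ∀ i, x i * (q i + Axm1 A x i) = 0 := fun i =>
      (Finset.sum_eq_zero_iff_of_nonneg fun i _ => mul_nonneg (hx i) (hw i)).mp hsum i
        (Finset.mem_univ i)
    exact ⟨hx, fun i hi => (mul_eq_zero.mp (hterm i)).resolve_left hi.ne',
      fun j _ => hw j⟩
  · rintro ⟨hx, hpos, hzero⟩
    have hcases : ∀ i, x i = 0 ∨ 0 < x i := fun i => (hx i).eq_or_lt.imp Eq.symm id
    refine ⟨hx, fun i => ?_, Finset.sum_eq_zero fun i _ => ?_⟩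
    · rcases hcases i with hi | hi
      · exact hzero i hi
      · exact (hpos i hi).ge
    · rcases hcases i with hi | hi
      · rw [hi, zero_mul]
      · rw [hpos i hi, mul_zero]

lemma isTCPSol_zero {m n : ℕ} (A : (Fin (m + 2) → Fin n) → ℝ) {q : Fin n → ℝ}
    (hq : 0 ≤ q) : IsTCPSol A q 0 :=
  ⟨fun _ => le_rfl, fun i => by simpa [Axm1_zero] using hq i, by simp⟩

lemma IsTCPSol.smul {m n : ℕ} {A : (Fin (m + 2) → Fin n) → ℝ} {q x : Fin n → ℝ}
    (hx : IsTCPSol A q x) {c : ℝ} (hc : 0 ≤ c) : IsTCPSol A (c ^ (m + 1) • q) (c • x) := by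
  obtain ⟨hnonneg, hw, hsum⟩ := hx
  have hw' : ∀ i, (c ^ (m + 1) • q) i + Axm1 A (c • x) i = c ^ (m + 1) * (q i + Axm1 A x i) :=
    fun i => by rw [Axm1_smul, Pi.smul_apply, smul_eq_mul, mul_add]
  refine ⟨fun i => mul_nonneg hc (hnonneg i), fun i => ?_, ?_⟩
  · rw [hw']
    exact mul_nonneg (pow_nonneg hc _) (hw i)
  · calc ∑ i, (c • x) i * ((c ^ (m + 1) • q) i + Axm1 A (c • x) i)
        = ∑ i, c * x i * (c ^ (m + 1) * (q i + Axm1 A x i)) :=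
          Finset.sum_congr rfl fun i _ => by rw [hw']; rfl
      _ = c ^ (m + 2) * ∑ i, x i * (q i + Axm1 A x i) := by
          rw [Finset.mul_sum]
          exact Finset.sum_congr rfl fun _ _ => by ring
      _ = 0 := by rw [hsum, mul_zero]

lemma rTensor_iff {m n : ℕ} (A : (Fin (m + 2) → Fin n) → ℝ) :
    RTensor A ↔ ∀ t : ℝ, 0 ≤ t → ∀ x, IsTCPSol A (fun _ => t) x → x = 0 := by
  simp only [isTCPSol_iff]
  constructor
  · rintro hR t ht x ⟨hx, hpos, hzero⟩
    by_contra hne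
    exact hR ⟨x, t, hx, hne, ht, hpos, hzero⟩
  · rintro h ⟨x, t, hx, hne, ht, hpos, hzero⟩
    exact hne (h t ht x ⟨hx, hpos, hzero⟩)

lemma r0Tensor_iff {m n : ℕ} (A : (Fin (m + 2) → Fin n) → ℝ) :
    R0Tensor A ↔ ∀ x, IsTCPSol A (fun _ => 0) x → x = 0 := by
  simp only [isTCPSol_iff, add_zero]
  constructor
  · rintro hR0 x ⟨hx, hpos, hzero⟩
    by_contra hne
    exact hR0 ⟨x, hx, hne, hpos, hzero⟩
  · rintro h ⟨x, hx, hne, hpos, hzero⟩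
    exact hne (h x ⟨hx, hpos, hzero⟩)

theorem stmt1 {m n : ℕ} (A : (Fin (m + 2) → Fin n) → ℝ) :
    RTensor A ↔ (R0Tensor A ∧ ∀ x : Fin n → ℝ, IsTCPSol A (fun _ => 1) x ↔ x = 0) := by
  rw [rTensor_iff, r0Tensor_iff]
  refine ⟨fun hR => ⟨hR 0 le_rfl, fun x => ⟨hR 1 zero_le_one x, ?_⟩⟩, ?_⟩
  · rintro rfl
    exact isTCPSol_zero A fun _ => zero_le_one
  · rintro ⟨hR0, hR1⟩ t ht x hx
    rcases ht.eq_or_lt with rfl | ht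
    · exact hR0 x hx
    -- rescale by `c` with `c ^ (m + 1) * t = 1` to reach the problem `(e, A)`
    set c : ℝ := t⁻¹ ^ ((m + 1 : ℕ) : ℝ)⁻¹
    have hc : 0 < c := by positivity
    have hct : c ^ (m + 1) • (fun _ => t) = fun _ : Fin n => (1 : ℝ) := by
      ext
      rw [Pi.smul_apply, Real.rpow_inv_natCast_pow (inv_nonneg.mpr ht.le) m.succ_ne_zero,
        smul_eq_mul, inv_mul_cancel₀ ht.ne']
    have hcx := (hR1 (c • x)).mp (hct ▸ hx.smul hc.le)
    exact (smul_eq_zero.mp hcx).resolve_left hc.ne'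
end

section
/- Every semi-positive R₀-tensor is an R-tensor. -/
open Finset

theorem stmt3 {m n : ℕ} (A : (Fin (m + 2) → Fin n) → ℝ)
    (hsp : SemiPositive A) (hr0 : R0Tensor A) : RTensor A := by
  rintro ⟨x, t, hx, hxne, ht, h1, h2⟩
  rcases eq_or_lt_of_le ht with ht0 | htpos
  · exact hr0 ⟨x, hx, hxne, fun i hi => by have := h1 i hi; linarith,
      fun j hj => by have := h2 j hj; linarith⟩
  · obtain ⟨k, hk, hk2⟩ := hsp x hx hxne
    have := h1 k hk
    linarith
end

section
/- Every strictly semi-positive tensor is both an R-tensor and an R₀-tensor. -/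
open Finset

theorem stmt5 {m n : ℕ} (A : (Fin (m + 2) → Fin n) → ℝ)
    (h : StrictlySemiPositive A) : RTensor A ∧ R0Tensor A := by
  constructor
  · rintro ⟨x, t, hx, hne, ht, h1, _⟩
    obtain ⟨k, hk, hAk⟩ := h x hx hne
    have := h1 k hk
    linarith
  · rintro ⟨x, hx, hne, h1, _⟩
    obtain ⟨k, hk, hAk⟩ := h x hx hne
    have := h1 k hk
    linarith
end

section
/- If A is a nonnegative Q-tensor and q ≥ 0, then the zero vector is the unique feasible solution of the tensor complementarity problem (q, A). -/
open Finset

lemma Axm1_nonneg {m n : ℕ} (A : (Fin (m + 2) → Fin n) → ℝ) (hA : ∀ f, 0 ≤ A f)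
    (x : Fin n → ℝ) (hx : ∀ i, 0 ≤ x i) (i : Fin n) : 0 ≤ Axm1 A x i :=
  Finset.sum_nonneg fun f _ => mul_nonneg (hA _) (Finset.prod_nonneg fun j _ => hx _)

lemma cons_const {m n : ℕ} (i : Fin n) :
    (Fin.cons i (fun _ : Fin (m + 1) => i) : Fin (m + 2) → Fin n) = fun _ => i := by
  funext k
  cases k using Fin.cases <;> simp

lemma diag_pos {m n : ℕ} (A : (Fin (m + 2) → Fin n) → ℝ) (hA : ∀ f, 0 ≤ A f)
    (hQ : QTensor A) (i : Fin n) : 0 < A (fun _ => i) := by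
  obtain ⟨x, hx0, hfeas, hcomp⟩ := hQ (fun j => if j = i then -1 else 1)
  have hterm : ∀ k ∈ Finset.univ,
      0 ≤ x k * ((if k = i then (-1:ℝ) else 1) + Axm1 A x k) :=
    fun k _ => mul_nonneg (hx0 k) (hfeas k)
  have hzero := (Finset.sum_eq_zero_iff_of_nonneg hterm).mp hcomp
  have hxj : ∀ j, j ≠ i → x j = 0 := by
    intro j hj
    by_contra h
    have hxjpos : 0 < x j := lt_of_le_of_ne (hx0 j) (Ne.symm h)
    have hz := hzero j (Finset.mem_univ j)
    rw [if_neg hj] at hz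
    have hnn := Axm1_nonneg A hA x hx0 j
    have : (0:ℝ) < x j * (1 + Axm1 A x j) := mul_pos hxjpos (by linarith)
    linarith
  have hlow : 1 ≤ Axm1 A x i := by
    have h1 : 0 ≤ -1 + Axm1 A x i := by simpa using hfeas i
    linarith
  have hsum : Axm1 A x i = A (fun _ => i) * x i ^ (m + 1) := by
    rw [Axm1, Finset.sum_eq_single (fun _ : Fin (m + 1) => i)]
    · rw [cons_const, Finset.prod_const, Finset.card_univ, Fintype.card_fin]
    · intro f _ hf
      have : ∃ j, f j ≠ i := by
        by_contra hc
        push_neg at hc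
        exact hf (funext hc)
      obtain ⟨j, hj⟩ := this
      rw [Finset.prod_eq_zero (Finset.mem_univ j) (hxj _ hj), mul_zero]
    · intro h
      exact absurd (Finset.mem_univ _) h
  rcases lt_or_eq_of_le (hA (fun _ => i)) with h | h
  · exact h
  · rw [hsum, ← h, zero_mul] at hlow
    linarith

theorem stmt10 {m n : ℕ} (A : (Fin (m + 2) → Fin n) → ℝ)
    (hA : ∀ f, 0 ≤ A f) (hQ : QTensor A) (q : Fin n → ℝ) (hq : ∀ i, 0 ≤ q i) :
    ∀ x : Fin n → ℝ, IsTCPSol A q x ↔ x = 0 := by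
  intro x
  constructor
  · rintro ⟨hx0, hfeas, hcomp⟩
    funext i
    by_contra h
    have hxi : 0 < x i := lt_of_le_of_ne (hx0 i) (Ne.symm h)
    have hterm : ∀ k ∈ Finset.univ, 0 ≤ x k * (q k + Axm1 A x k) :=
      fun k _ => mul_nonneg (hx0 k) (hfeas k)
    have hzero := (Finset.sum_eq_zero_iff_of_nonneg hterm).mp hcomp i (Finset.mem_univ i)
    have hApos : 0 < Axm1 A x i := by
      have hlow : A (fun _ => i) * x i ^ (m + 1) ≤ Axm1 A x i := by
        have := Finset.single_le_sum
          (f := fun f : Fin (m + 1) → Fin n => A (Fin.cons i f) * ∏ j, x (f j))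
          (fun f _ => mul_nonneg (hA _) (Finset.prod_nonneg fun j _ => hx0 _))
          (Finset.mem_univ (fun _ : Fin (m + 1) => i))
        simpa only [cons_const, Finset.prod_const, Finset.card_univ,
          Fintype.card_fin, Axm1] using this
      have : 0 < A (fun _ => i) * x i ^ (m + 1) :=
        mul_pos (diag_pos A hA hQ i) (pow_pos hxi _)
      linarith
    have : 0 < x i * (q i + Axm1 A x i) := mul_pos hxi (by have := hq i; linarith)
    linarith
  · rintro rfl
    have hz : ∀ i, Axm1 A (0 : Fin n → ℝ) i = 0 := by
      intro i
      rw [Axm1]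
      apply Finset.sum_eq_zero
      intro f _
      simp [Finset.prod_const, zero_pow (Nat.succ_ne_zero m)]
    exact ⟨fun i => le_refl 0, fun i => by rw [hz]; simpa using hq i,
      by simp⟩
end

section
/- If the map F(x) = A x^{m-1} defined by a tensor A of order m and dimension n is a P function on ℝⁿ₊, then A is a P-tensor restricted to nonnegative vectors; in particular A is then strictly semi-positive and hence an R-tensor. -/
open Finset

theorem stmt17 {m n : ℕ} (A : (Fin (m + 2) → Fin n) → ℝ)
    (hPfun : ∀ x y : Fin n → ℝ, (∀ i, 0 ≤ x i) → (∀ i, 0 ≤ y i) → x ≠ y →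
      ∃ k, 0 < (x k - y k) * (Axm1 A x k - Axm1 A y k)) :
    (∀ x : Fin n → ℝ, (∀ i, 0 ≤ x i) → x ≠ 0 → ∃ i, 0 < x i * Axm1 A x i) ∧
      StrictlySemiPositive A ∧ RTensor A := by
  have hzero : ∀ i, Axm1 A (0 : Fin n → ℝ) i = 0 := by
    intro i
    unfold Axm1
    apply Finset.sum_eq_zero
    intro f _
    simp
  have key : ∀ x : Fin n → ℝ, (∀ i, 0 ≤ x i) → x ≠ 0 → ∃ i, 0 < x i * Axm1 A x i := by
    intro x hx hx0
    obtain ⟨k, hk⟩ := hPfun x 0 hx (fun i => le_refl 0) hx0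
    refine ⟨k, ?_⟩
    simpa [hzero] using hk
  have hssp : StrictlySemiPositive A := by
    intro x hx hx0
    obtain ⟨k, hk⟩ := key x hx hx0
    have hxk : 0 < x k := by
      rcases lt_or_eq_of_le (hx k) with h | h
      · exact h
      · exfalso; rw [← h] at hk; simp at hk
    refine ⟨k, hxk, ?_⟩
    rcases mul_pos_iff.mp hk with h | h
    · exact h.2
    · exact absurd hxk (not_lt.mpr h.1.le)
  refine ⟨key, hssp, ?_⟩
  rintro ⟨x, t, hx, hx0, ht, h1, _⟩
  obtain ⟨k, hxk, hAk⟩ := hssp x hx hx0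
  have := h1 k hxk
  linarith
end
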